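/- arXiv:2404.08316 — 2 statements merged into one kernel-verified Lean document; each statement's English description precedes it below -/
import Mathlib

section
/- (Flow invariance of the probability simplex, proved inside Lemma B.3.) Let S ≥ 1, T > 0 and let A : [0,T] × ℝ^S → ℝ^{S×S} be bounded, Borel measurable in t, Lipschitz continuous in x uniformly in t, and such that A(t,x) is a conservative intensity matrix (nonnegative off-diagonal entries, zero row sums) for every (t,x). If μ : [0,T] → ℝ^S is absolutely continuous, μ(0) ∈ 𝒫(𝕊), and μ(t) = μ(0) + ∫_0^t A(s,μ(s))^T μ(s) ds for all t ∈ [0,T], then μ(t) ∈ 𝒫(𝕊) for all t ∈ [0,T]. -/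
open MeasureTheory

/-- The probability simplex in `ℝ^S`. -/
def simplex (S : ℕ) : Set (Fin S → ℝ) :=
  {m | (∀ i, 0 ≤ m i) ∧ ∑ i, m i = 1}

/-- `f` is absolutely continuous on the interval `[a,b]`. -/
def AbsContOn {E : Type*} [NormedAddCommGroup E] (f : ℝ → E) (a b : ℝ) : Prop :=
  ∀ ε > (0 : ℝ), ∃ δ > (0 : ℝ), ∀ (N : ℕ) (c d : Fin N → ℝ),
    (∀ k, a ≤ c k ∧ c k ≤ d k ∧ d k ≤ b) →
    (∀ k l, k ≠ l → Set.Ioo (c k) (d k) ∩ Set.Ioo (c l) (d l) = ∅) →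
    ∑ k, (d k - c k) < δ → ∑ k, ‖f (d k) - f (c k)‖ < ε

/-!
Conservation of mass is immediate: the entries of `Aᵀ m` sum to zero because the rows of `A`
do. For positivity, bound `A` entrywise by `C`; then `A + C • 1` has entries in `[0, 2C]`, and
`ν(t) = exp (C t) • μ(t)` solves `ν' = (A + C • 1)ᵀ ν` in integral form. A nonnegative matrix can
only push a coordinate of `ν` below zero through the negative parts of the coordinates, so the total
negative mass `V` of `ν` satisfies `V t ≤ 2 C S ∫₀ᵗ V` with `V 0 = 0`, and Grönwall gives `V = 0`.
-/

open Set Finset Real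

theorem continuousOn_of_eq_add_integral {x g : ℝ → ℝ} {a b : ℝ}
    (hg : IntervalIntegrable g volume a b) (hab : a ≤ b)
    (hx : ∀ t ∈ Icc a b, x t = x a + ∫ s in a..t, g s) : ContinuousOn x (Icc a b) := by
  have hprim := intervalIntegral.continuousOn_primitive_interval' hg left_mem_uIcc
  rw [uIcc_of_le hab] at hprim
  exact (continuousOn_const.add hprim).congr hx

theorem exp_mul_eq_add_integral {x g : ℝ → ℝ} {a t : ℝ} (L : ℝ)
    (hg : IntervalIntegrable g volume a t)
    (hx : ∀ s ∈ uIcc a t, x s = x a + ∫ u in a..s, g u) :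
    exp (L * t) * x t = exp (L * a) * x a + ∫ s in a..t, exp (L * s) * (L * x s + g s) := by
  set F : ℝ → ℝ := fun s => x a + ∫ u in a..s, g u
  have hE : AbsolutelyContinuousOnInterval (fun s => exp (L * s)) a t :=
    ContDiffOn.absolutelyContinuousOnInterval (by fun_prop)
  have hF : AbsolutelyContinuousOnInterval F a t :=
    (ContDiffOn.absolutelyContinuousOnInterval contDiffOn_const).add
      (hg.absolutelyContinuousOnInterval_intervalIntegral left_mem_uIcc)
  have hFx : ∀ s ∈ uIcc a t, F s = x s := fun s hs => (hx s hs).symm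
  have hparts := hE.integral_deriv_mul_eq_sub hF
  rw [hFx t right_mem_uIcc, hFx a left_mem_uIcc] at hparts
  rw [← sub_eq_iff_eq_add', ← hparts]
  refine intervalIntegral.integral_congr_ae ?_
  filter_upwards [hg.ae_hasDerivAt_integral] with s hs hsI
  have hsI' : s ∈ uIcc a t := uIoc_subset_uIcc hsI
  have hdE : HasDerivAt (fun s => exp (L * s)) (exp (L * s) * L) s := by
    simpa using ((hasDerivAt_id s).const_mul L).exp
  rw [hdE.deriv, ((hs hsI' a left_mem_uIcc).const_add (x a)).deriv, hFx s hsI']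
  ring

theorem neg_mul_negPart_le_mul {x b K : ℝ} (hb : 0 ≤ b) (hbK : b ≤ K) : -(K * x⁻) ≤ x * b := by
  nlinarith [neg_le_negPart x, negPart_nonneg x]

theorem neg_two_mul_sum_negPart_le {ι : Type*} [Fintype ι] {M : ι → ι → ℝ} {C : ℝ}
    (hM : ∀ i j, |M i j| ≤ C) (hoff : ∀ i j, i ≠ j → 0 ≤ M i j) (v : ι → ℝ) (i : ι) :
    -(2 * C * ∑ j, (v j)⁻) ≤ ∑ j, v j * M j i + C * v i := by
  classical
  have hshift : ∑ j, v j * M j i + C * v i = ∑ j, v j * (M j i + if j = i then C else 0) := by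
    simp [mul_add, sum_add_distrib, mul_comm]
  rw [hshift, mul_sum, ← sum_neg_distrib]
  refine sum_le_sum fun j _ => neg_mul_negPart_le_mul ?_ ?_
  · have := abs_le.1 (hM j i)
    split_ifs with h
    · subst h; linarith
    · simpa using hoff j i h
  · have := abs_le.1 (hM j i)
    have := abs_le.1 (hM i i)
    split_ifs <;> linarith

theorem sum_sum_mul_eq_zero {ι R : Type*} [Fintype ι] [NonUnitalNonAssocSemiring R]
    {M : ι → ι → R} (hrow : ∀ j, ∑ i, M j i = 0) (v : ι → R) :
    ∑ i, ∑ j, v j * M j i = 0 := by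
  rw [sum_comm]
  simp [← mul_sum, hrow]

theorem eq_zero_of_le_mul_integral {V : ℝ → ℝ} {K a b : ℝ} (hV : ContinuousOn V (Icc a b))
    (hV0 : ∀ t ∈ Icc a b, 0 ≤ V t) (hle : ∀ t ∈ Icc a b, V t ≤ K * ∫ s in a..t, V s) :
    ∀ t ∈ Icc a b, V t = 0 := by
  intro t ht
  have hab : a ≤ b := ht.1.trans ht.2
  set W := IccExtend hab ((Icc a b).domRestrict V)
  have hW : Continuous W := hV.domRestrict.Icc_extend'
  have hWV : EqOn W V (Icc a b) := fun s hs => IccExtend_of_mem hab _ hs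
  have hint : ∀ s ∈ Icc a b, ∫ u in a..s, W u = ∫ u in a..s, V u := fun s hs =>
    intervalIntegral.integral_congr (hWV.mono (uIcc_of_le hs.1 ▸ Icc_subset_Icc_right hs.2))
  have hP0 : ∀ s ∈ Icc a b, 0 ≤ ∫ u in a..s, V u := fun s hs =>
    intervalIntegral.integral_nonneg hs.1 fun u hu => hV0 u ⟨hu.1, hu.2.trans hs.2⟩
  have hP : ∀ s ∈ Icc a b, ∫ u in a..s, W u = 0 := by
    refine eq_zero_of_abs_deriv_le_mul_abs_self_of_eq_zero_right (K := K)
      (fun s _ => (hW.integral_hasStrictDerivAt a s).hasDerivAt.continuousAt.continuousWithinAt)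
      (fun s _ => (hW.integral_hasStrictDerivAt a s).hasDerivAt.hasDerivWithinAt)
      intervalIntegral.integral_same fun s hs => ?_
    have hs' : s ∈ Icc a b := Ico_subset_Icc_self hs
    rw [Real.norm_eq_abs, Real.norm_eq_abs, hWV hs', hint s hs', abs_of_nonneg (hV0 s hs'),
      abs_of_nonneg (hP0 s hs')]
    exact hle s hs'
  have := hle t ht
  rw [← hint t ht, hP t ht, mul_zero] at this
  exact le_antisymm this (hV0 t ht)

section ForwardEquation

variable {ι : Type*} [Fintype ι]

def IsForwardSolution (A : ℝ → (ι → ℝ) → ι → ι → ℝ) (μ : ℝ → ι → ℝ) (T : ℝ) : Prop :=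
  ∀ t ∈ Icc (0 : ℝ) T, ∀ i,
    IntervalIntegrable (fun s => ∑ j, μ s j * A s (μ s) j i) volume 0 t ∧
    μ t i = μ 0 i + ∫ s in (0 : ℝ)..t, ∑ j, μ s j * A s (μ s) j i

variable {A : ℝ → (ι → ℝ) → ι → ι → ℝ} {μ : ℝ → ι → ℝ} {T : ℝ}

theorem IsForwardSolution.continuousOn (heq : IsForwardSolution A μ T) (hT : 0 ≤ T) (i : ι) :
    ContinuousOn (μ · i) (Icc 0 T) :=
  continuousOn_of_eq_add_integral (heq T ⟨hT, le_rfl⟩ i).1 hT fun t ht => (heq t ht i).2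

theorem IsForwardSolution.sum_eq (heq : IsForwardSolution A μ T)
    (hrow : ∀ t x i, ∑ j, A t x i j = 0) {t : ℝ} (ht : t ∈ Icc 0 T) : ∑ i, μ t i = ∑ i, μ 0 i := by
  rw [sum_congr rfl fun i _ => (heq t ht i).2, sum_add_distrib,
    ← intervalIntegral.integral_finsetSum fun i _ => (heq t ht i).1]
  simp [sum_sum_mul_eq_zero (hrow _ _)]

theorem IsForwardSolution.negPart_exp_mul_le_integral (heq : IsForwardSolution A μ T) {C : ℝ}
    (hC : ∀ t x i j, |A t x i j| ≤ C) (hoff : ∀ t x i j, i ≠ j → 0 ≤ A t x i j)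
    (hμ0 : ∀ i, 0 ≤ μ 0 i) {t : ℝ} (ht : t ∈ Icc 0 T) (i : ι) :
    (exp (C * t) * μ t i)⁻ ≤ 2 * C * ∫ s in (0 : ℝ)..t, ∑ j, (exp (C * s) * μ s j)⁻ := by
  have hC0 : 0 ≤ C := (abs_nonneg _).trans (hC 0 0 i i)
  have hsub : uIcc 0 t ⊆ Icc 0 T := uIcc_of_le ht.1 ▸ Icc_subset_Icc_right ht.2
  have hvar := exp_mul_eq_add_integral C (heq t ht i).1 fun s hs => (heq s (hsub hs) i).2
  rw [mul_zero, exp_zero, one_mul] at hvar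
  have hlow : ∀ s ∈ Icc 0 t, -(2 * C * ∑ j, (exp (C * s) * μ s j)⁻) ≤
      exp (C * s) * (C * μ s i + ∑ j, μ s j * A s (μ s) j i) := by
    intro s _
    convert neg_two_mul_sum_negPart_le (hC s (μ s)) (hoff s (μ s)) (exp (C * s) * μ s ·) i
      using 1
    rw [mul_add, mul_sum]
    simp only [mul_assoc]
    ring
  have hμt : ∀ j, ContinuousOn (μ · j) (uIcc 0 t) := fun j =>
    (heq.continuousOn (ht.1.trans ht.2) j).mono hsub
  have hV : ContinuousOn (fun s => -(2 * C * ∑ j, (exp (C * s) * μ s j)⁻)) (uIcc 0 t) := by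
    fun_prop
  have hrhs : IntervalIntegrable
      (fun s => exp (C * s) * (C * μ s i + ∑ j, μ s j * A s (μ s) j i)) volume 0 t :=
    (((hμt i).const_mul C).intervalIntegrable.add (heq t ht i).1).continuousOn_mul (by fun_prop)
  have hint := intervalIntegral.integral_mono_on ht.1 hV.intervalIntegrable hrhs hlow
  rw [intervalIntegral.integral_neg, intervalIntegral.integral_const_mul] at hint
  rw [negPart_def]
  refine sup_le ?_ ?_
  · linarith [hμ0 i]
  · exact mul_nonneg (by positivity) (intervalIntegral.integral_nonneg ht.1 fun s _ =>
      sum_nonneg fun j _ => negPart_nonneg _)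

end ForwardEquation

theorem simplex_flow_invariant_general (S : ℕ) (T : ℝ) (hT : 0 < T)
    (A : ℝ → (Fin S → ℝ) → Fin S → Fin S → ℝ)
    (Abdd : ∃ Cb : ℝ, ∀ t x i j, |A t x i j| ≤ Cb)
    (Aoff : ∀ t x i j, i ≠ j → 0 ≤ A t x i j)
    (Arow : ∀ t x i, ∑ j, A t x i j = 0)
    (μ : ℝ → Fin S → ℝ)
    (h0 : μ 0 ∈ simplex S)
    (heq : ∀ t ∈ Set.Icc (0 : ℝ) T, ∀ i,
      IntervalIntegrable (fun s => ∑ j, μ s j * A s (μ s) j i) volume 0 t ∧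
      μ t i = μ 0 i + ∫ s in (0 : ℝ)..t, ∑ j, μ s j * A s (μ s) j i) :
    ∀ t ∈ Set.Icc (0 : ℝ) T, μ t ∈ simplex S := by
  obtain ⟨C, hC⟩ := Abdd
  have hμ : ∀ i, ContinuousOn (μ · i) (Icc 0 T) := IsForwardSolution.continuousOn heq hT.le
  set V : ℝ → ℝ := fun s => ∑ j, (exp (C * s) * μ s j)⁻
  have hV : ∀ t ∈ Icc 0 T, V t = 0 := by
    refine eq_zero_of_le_mul_integral (K := S * (2 * C)) (by fun_prop)
      (fun t _ => sum_nonneg fun j _ => negPart_nonneg _) fun t ht => ?_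
    calc V t ≤ ∑ _j : Fin S, 2 * C * ∫ s in (0 : ℝ)..t, V s :=
          sum_le_sum fun j _ => IsForwardSolution.negPart_exp_mul_le_integral heq hC Aoff h0.1 ht j
      _ = S * (2 * C) * ∫ s in (0 : ℝ)..t, V s := by simp [mul_assoc]
  intro t ht
  refine ⟨fun i => ?_, (IsForwardSolution.sum_eq heq Arow ht).trans h0.2⟩
  have hi := (sum_eq_zero_iff_of_nonneg fun j _ => negPart_nonneg _).1 (hV t ht) i (mem_univ i)
  exact (mul_nonneg_iff_of_pos_left (exp_pos _)).1 (negPart_eq_zero.1 hi)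

/-- **Flow invariance of the probability simplex** (inside Lemma B.3).
Let `A : [0,T] × ℝ^S → ℝ^{S×S}` be bounded, Borel measurable in `t`, Lipschitz in `x`
uniformly in `t`, and such that `A(t,x)` is a conservative intensity matrix for all `(t,x)`.
If `μ` is absolutely continuous with `μ(0)` in the simplex and satisfies the Carathéodory
(integral) equation `μ(t) = μ(0) + ∫_0^t A(s,μ(s))ᵀ μ(s) ds` on `[0,T]`,
then `μ(t)` stays in the simplex for all `t ∈ [0,T]`. -/
theorem simplex_flow_invariant (S : ℕ) (hS : 1 ≤ S) (T : ℝ) (hT : 0 < T)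
    (A : ℝ → (Fin S → ℝ) → Fin S → Fin S → ℝ)
    (Abdd : ∃ Cb : ℝ, ∀ t x i j, |A t x i j| ≤ Cb)
    (Ameas : ∀ x, Measurable fun t => A t x)
    (Alip : ∃ L : NNReal, ∀ t, LipschitzWith L (A t))
    (Aoff : ∀ t x i j, i ≠ j → 0 ≤ A t x i j)
    (Arow : ∀ t x i, ∑ j, A t x i j = 0)
    (μ : ℝ → Fin S → ℝ)
    (hAC : AbsContOn μ 0 T)
    (h0 : μ 0 ∈ simplex S)
    (heq : ∀ t ∈ Set.Icc (0 : ℝ) T, ∀ i,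
      IntervalIntegrable (fun s => ∑ j, μ s j * A s (μ s) j i) volume 0 t ∧
      μ t i = μ 0 i + ∫ s in (0 : ℝ)..t, ∑ j, μ s j * A s (μ s) j i) :
    ∀ t ∈ Set.Icc (0 : ℝ) T, μ t ∈ simplex S :=
  simplex_flow_invariant_general S T hT A Abdd Aoff Arow μ h0 heq
end

section
/- (A priori bound depending on the number of shocks, proved inside Lemma B.2.) Let the model data satisfy the Lipschitz assumptions, let μ ∈ M, and let v be a regular solution of (E1) and (E3). Then for every u ∈ 𝕌 and every t with (t,u) ∈ TS, ‖v(t,u)‖ ≤ (Ψmax + ψmax T) · exp((Qmax + λmax)T) · Σ_{i=0}^{n−Z(u)} ( exp((Qmax + λmax)T) · λmax · T )^i. -/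
open MeasureTheory
open scoped BigOperators Classical

namespace MFGShocks

/-- The probability simplex `𝒫(𝕊)` in `ℝ^S`. -/
def simplex (S : ℕ) : Set (Fin S → ℝ) :=
  {m | (∀ i, 0 ≤ m i) ∧ ∑ i, m i = 1}

/-- Membership in the parameter set `𝕌`: for some `k ≤ n`, the first `k` coordinates are
increasing and lie in `[0,T]` and the remaining coordinates equal `-1`. -/
def memU (n : ℕ) (T : ℝ) (u : Fin n → ℝ) : Prop :=
  ∃ k ≤ n, (∀ i : Fin n, (i : ℕ) < k → u i ∈ Set.Icc (0 : ℝ) T) ∧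
    (∀ i j : Fin n, (j : ℕ) < k → i ≤ j → u i ≤ u j) ∧
    (∀ i : Fin n, k ≤ (i : ℕ) → u i = -1)

/-- `Z(u)`: the number of coordinates of `u` different from `-1`, i.e.\ the number of
shocks recorded in `u`. -/
noncomputable def Zu {n : ℕ} (u : Fin n → ℝ) : ℕ :=
  (Finset.univ.filter fun i => u i ≠ -1).card

/-- Membership `(t,u) ∈ TS`. -/
def memTS (n : ℕ) (T : ℝ) (t : ℝ) (u : Fin n → ℝ) : Prop :=
  memU n T u ∧ t ∈ Set.Icc (0 : ℝ) T ∧ ∀ i, u i ≤ t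

/-- `→(u,t)`: record a new shock at time `t` (replace coordinate `Z(u)+1` of `u` by `t`). -/
noncomputable def push {n : ℕ} (u : Fin n → ℝ) (t : ℝ) : Fin n → ℝ :=
  fun i => if (i : ℕ) = Zu u then t else u i

/-- `←u`: delete the last shock (replace coordinate `Z(u)` of `u` by `-1`). -/
noncomputable def pop {n : ℕ} (u : Fin n → ℝ) : Fin n → ℝ :=
  fun i => if (i : ℕ) + 1 = Zu u then -1 else u i

/-- `t_u = u^{Z(u)}`: the time of the last shock recorded in `u` (`0` if there is none). -/
noncomputable def lastTime {n : ℕ} (u : Fin n → ℝ) : ℝ :=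
  if h : Zu u - 1 < n then u ⟨Zu u - 1, h⟩ else 0

/-- The left endpoint of the time interval associated with the parameter `u`:
`t_u` if `u` records at least one shock, and `0` otherwise. -/
noncomputable def startTime {n : ℕ} (u : Fin n → ℝ) : ℝ :=
  if Zu u = 0 then 0 else lastTime u

/-- `f` is absolutely continuous on the interval `[a,b]`. -/
def AbsContOn {E : Type*} [NormedAddCommGroup E] (f : ℝ → E) (a b : ℝ) : Prop :=
  ∀ ε > (0 : ℝ), ∃ δ > (0 : ℝ), ∀ (N : ℕ) (c d : Fin N → ℝ),
    (∀ k, a ≤ c k ∧ c k ≤ d k ∧ d k ≤ b) →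
    (∀ k l, k ≠ l → Set.Ioo (c k) (d k) ∩ Set.Ioo (c l) (d l) = ∅) →
    ∑ k, (d k - c k) < δ → ∑ k, ‖f (d k) - f (c k)‖ < ε

/-- A function `f : TS → ℝ^S` is regular if `f(·,u)` is absolutely continuous on
`[max_k u^k, T]` (intersected with `[0,T]`) for every `u ∈ 𝕌`. -/
def Regular (S n : ℕ) (T : ℝ) (f : ℝ → (Fin n → ℝ) → Fin S → ℝ) : Prop :=
  ∀ u : Fin n → ℝ, memU n T u → AbsContOn (fun t => f t u) (startTime u) T

/-- The model data: reduced-form running reward `ψ̂`, reduced-form intensity matrix `Q̂`,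
shock intensities `λ`, terminal reward `Ψ`, relocation map `J` (independent of the
distribution) and initial distribution `m₀`. -/
structure Model (S n : ℕ) where
  psi : ℝ → (Fin n → ℝ) → (Fin S → ℝ) → (Fin S → ℝ) → Fin S → ℝ
  Q : ℝ → (Fin n → ℝ) → (Fin S → ℝ) → (Fin S → ℝ) → Fin S → Fin S → ℝ
  lam : ℕ → ℝ → (Fin S → ℝ) → ℝ
  Psi : ℕ → (Fin S → ℝ) → Fin S → ℝ
  J : ℝ → Fin S → Fin S
  m0 : Fin S → ℝ

/-- The standing (boundedness, measurability, intensity-matrix and Lipschitz) assumptions on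
the model data, together with the constants `Ψmax, ψmax, Qmax, λmax, Jmax` bounding the data
and the Lipschitz constants `L_ψ̂, L_Q̂, L_Ψ, L_λ`.  Throughout, `ℝ^S` carries the maximum
norm and the matrix norm is the compatible induced one (maximal absolute row sum). -/
structure Hyps (S n : ℕ) (T : ℝ) (D : Model S n)
    (Lpsi LQ LPsi Llam Psimax psimax Qmax lammax : ℝ) (Jmax : ℕ) : Prop where
  hS : 1 ≤ S
  hn : 1 ≤ n
  hT : 0 < T
  hm0 : D.m0 ∈ simplex S
  hLpsi : 0 < Lpsi
  hLQ : 0 < LQ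
  hLPsi : 0 < LPsi
  hLlam : 0 < Llam
  psi_meas : Measurable fun p : ℝ × (Fin n → ℝ) × (Fin S → ℝ) × (Fin S → ℝ) =>
    D.psi p.1 p.2.1 p.2.2.1 p.2.2.2
  Q_meas : Measurable fun p : ℝ × (Fin n → ℝ) × (Fin S → ℝ) × (Fin S → ℝ) =>
    D.Q p.1 p.2.1 p.2.2.1 p.2.2.2
  lam_meas : ∀ k, Measurable fun p : ℝ × (Fin S → ℝ) => D.lam k p.1 p.2
  Psi_meas : ∀ k, Measurable (D.Psi k)
  J_meas : Measurable D.J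
  psi_bdd : ∀ t u m v, memTS n T t u → m ∈ simplex S → ∀ i, |D.psi t u m v i| ≤ psimax
  Q_bdd : ∀ t u m v, memTS n T t u → m ∈ simplex S → ∀ i, ∑ j, |D.Q t u m v i j| ≤ Qmax
  Q_offdiag : ∀ t u m v i j, i ≠ j → 0 ≤ D.Q t u m v i j
  Q_rowsum : ∀ t u m v i, ∑ j, D.Q t u m v i j = 0
  lam_pos : ∀ k, 1 ≤ k → k ≤ n → ∀ t ∈ Set.Icc (0 : ℝ) T, ∀ m ∈ simplex S,
    0 < D.lam k t m
  lam_bdd : ∀ k, 1 ≤ k → k ≤ n → ∀ t ∈ Set.Icc (0 : ℝ) T, ∀ m ∈ simplex S,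
    D.lam k t m ≤ lammax
  Psi_bdd : ∀ k ≤ n, ∀ m ∈ simplex S, ∀ i, |D.Psi k m i| ≤ Psimax
  psi_lip : ∀ t u, memTS n T t u → ∀ m₁ ∈ simplex S, ∀ m₂ ∈ simplex S,
    ∀ v₁ v₂ : Fin S → ℝ, ∀ i,
      |D.psi t u m₁ v₁ i - D.psi t u m₂ v₂ i| ≤ Lpsi * (‖m₁ - m₂‖ + ‖v₁ - v₂‖)
  Q_lip : ∀ t u, memTS n T t u → ∀ m₁ ∈ simplex S, ∀ m₂ ∈ simplex S,
    ∀ v₁ v₂ : Fin S → ℝ, ∀ i,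
      ∑ j, |D.Q t u m₁ v₁ i j - D.Q t u m₂ v₂ i j| ≤ LQ * (‖m₁ - m₂‖ + ‖v₁ - v₂‖)
  Psi_lip : ∀ k ≤ n, ∀ m₁ ∈ simplex S, ∀ m₂ ∈ simplex S,
    ‖D.Psi k m₁ - D.Psi k m₂‖ ≤ LPsi * ‖m₁ - m₂‖
  lam_lip : ∀ k, 1 ≤ k → k ≤ n → ∀ t ∈ Set.Icc (0 : ℝ) T, ∀ m₁ ∈ simplex S, ∀ m₂ ∈ simplex S,
    |D.lam k t m₁ - D.lam k t m₂| ≤ Llam * ‖m₁ - m₂‖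
  J_bdd : ∀ t ∈ Set.Icc (0 : ℝ) T, ∀ j : Fin S,
    (Finset.univ.filter fun i => D.J t i = j).card ≤ Jmax

/-- The constant `v_max`. -/
noncomputable def vmaxC (n : ℕ) (T Psimax psimax Qmax lammax : ℝ) : ℝ :=
  (Psimax + psimax * T) * Real.exp ((Qmax + lammax) * T) *
    ∑ i ∈ Finset.range (n + 1), (Real.exp ((Qmax + lammax) * T) * lammax * T) ^ i

/-- The constant `K₁ = L_ψ̂ + L_Q̂ v_max + 2 v_max L_λ`. -/
noncomputable def K1C (n : ℕ) (T Lpsi LQ Llam Psimax psimax Qmax lammax : ℝ) : ℝ :=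
  Lpsi + LQ * vmaxC n T Psimax psimax Qmax lammax +
    2 * vmaxC n T Psimax psimax Qmax lammax * Llam

/-- The constant `K₂ = L_ψ̂ + v_max L_Q̂ + Qmax + λmax`. -/
noncomputable def K2C (n : ℕ) (T Lpsi LQ Psimax psimax Qmax lammax : ℝ) : ℝ :=
  Lpsi + vmaxC n T Psimax psimax Qmax lammax * LQ + Qmax + lammax

/-- The right-hand side of the backward equation (E1), written for the integral
(Carathéodory) formulation `v(t,u) = Ψ(Z(u),μ(T,u)) + ∫_t^T (E1rhs)(s) ds`. -/
noncomputable def E1rhs {S n : ℕ} (D : Model S n)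
    (μ v : ℝ → (Fin n → ℝ) → Fin S → ℝ) (u : Fin n → ℝ) (i : Fin S) (s : ℝ) : ℝ :=
  D.psi s u (μ s u) (v s u) i + (∑ j, D.Q s u (μ s u) (v s u) i j * v s u j) +
    (if Zu u < n then
      D.lam (Zu u + 1) s (μ s u) * (v s (push u s) (D.J s i) - v s u i)
    else 0)

/-- `v` is a (Carathéodory) solution of the backward equation (E1) with terminal
condition (E3), given the flow `μ`. -/
def SolBackward (S n : ℕ) (T : ℝ) (D : Model S n)
    (μ v : ℝ → (Fin n → ℝ) → Fin S → ℝ) : Prop :=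
  ∀ u : Fin n → ℝ, memU n T u →
    (∀ i : Fin S, v T u i = D.Psi (Zu u) (μ T u) i) ∧
    ∀ t : ℝ, memTS n T t u → ∀ i : Fin S,
      IntervalIntegrable (E1rhs D μ v u i) volume t T ∧
      v t u i = D.Psi (Zu u) (μ T u) i + ∫ s in t..T, E1rhs D μ v u i s

/-- The right-hand side of the forward equation (E2). -/
noncomputable def E2rhs {S n : ℕ} (D : Model S n)
    (v μ : ℝ → (Fin n → ℝ) → Fin S → ℝ) (u : Fin n → ℝ) (i : Fin S) (s : ℝ) : ℝ :=
  ∑ j, μ s u j * D.Q s u (μ s u) (v s u) j i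

/-- `μ` is a (Carathéodory) solution of the forward equation (E2) with initial
condition (E4) and consistency conditions (E5), given the value function `v`. -/
def SolForward (S n : ℕ) (T : ℝ) (D : Model S n)
    (v μ : ℝ → (Fin n → ℝ) → Fin S → ℝ) : Prop :=
  (∀ i, μ 0 (fun _ => (-1 : ℝ)) i = D.m0 i) ∧
  (∀ u : Fin n → ℝ, memU n T u → 1 ≤ Zu u → ∀ j : Fin S,
    μ (lastTime u) u j =
      ∑ i, if D.J (lastTime u) i = j then μ (lastTime u) (pop u) i else 0) ∧
  (∀ u : Fin n → ℝ, memU n T u → ∀ t : ℝ, memTS n T t u → ∀ i : Fin S,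
    IntervalIntegrable (E2rhs D v μ u i) volume (startTime u) t ∧
    μ t u i = μ (startTime u) u i + ∫ s in (startTime u)..t, E2rhs D v μ u i s)

/-- Membership in `M`: a `𝒫(𝕊)`-valued function on `TS` that is `Qmax`-Lipschitz in time. -/
def MemM (S n : ℕ) (T Qmax : ℝ) (μ : ℝ → (Fin n → ℝ) → Fin S → ℝ) : Prop :=
  (∀ t u, memTS n T t u → μ t u ∈ simplex S) ∧
  ∀ u : Fin n → ℝ, memU n T u → ∀ t₁ t₂ : ℝ, memTS n T t₁ u → memTS n T t₂ u →
    ‖μ t₁ u - μ t₂ u‖ ≤ Qmax * |t₁ - t₂|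

/-- Membership in `V`: a regular function on `TS` bounded by `v_max` in supremum norm. -/
def MemV (S n : ℕ) (T vmaxVal : ℝ) (v : ℝ → (Fin n → ℝ) → Fin S → ℝ) : Prop :=
  Regular S n T v ∧ ∀ t u, memTS n T t u → ‖v t u‖ ≤ vmaxVal

/-- The supremum norm over `TS` of a function `f : TS → ℝ^S`. -/
noncomputable def supTS (S n : ℕ) (T : ℝ) (f : ℝ → (Fin n → ℝ) → Fin S → ℝ) : ℝ :=
  sSup {r : ℝ | ∃ t u, memTS n T t u ∧ r = ‖f t u‖}

end MFGShocks

/-!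
For a fixed history `u`, the integral form of (E1) bounds the integrand by
`ψmax + λmax B + (Qmax + λmax) ‖v(s,u)‖`, where `B` bounds `v` after one more shock, so the
backward Grönwall inequality gives `‖v(t,u)‖ ≤ (Ψmax + ψmax T + λmax B T) e^{(Qmax+λmax)T}`.
When `Z(u) = n` no further shock can occur and `B = 0` may be used; induction on `n - Z(u)`
then turns the recursion `B ↦ C + a B`, with `C = (Ψmax + ψmax T) e^{(Qmax+λmax)T}` and
`a = λmax T e^{(Qmax+λmax)T}`, into the geometric sum `C (1 + a + ⋯ + a^{n-Z(u)})`.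
-/

namespace MFGShocks

open Set

theorem Zu_le {n : ℕ} (u : Fin n → ℝ) : Zu u ≤ n :=
  (Finset.card_filter_le _ _).trans (Finset.card_fin n).le

theorem Zu_eq_of_forall {n k : ℕ} {u : Fin n → ℝ} (hk : k ≤ n)
    (hlt : ∀ i : Fin n, (i : ℕ) < k → u i ≠ -1) (hge : ∀ i : Fin n, k ≤ (i : ℕ) → u i = -1) :
    Zu u = k := by
  have hfilter : (Finset.univ.filter fun i : Fin n => u i ≠ -1) =
      Finset.univ.filter fun i : Fin n => (i : ℕ) < k := by
    ext i
    by_cases hi : (i : ℕ) < k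
    · simp [hi, hlt]
    · simp [hi, hge i (not_lt.1 hi)]
  rw [Zu, hfilter, Fin.card_filter_val_lt, min_eq_right hk]

theorem memTS_of_mem_Icc {n : ℕ} {T t s : ℝ} {u : Fin n → ℝ} (h : memTS n T t u)
    (hs : s ∈ Icc t T) : memTS n T s u :=
  ⟨h.1, ⟨h.2.1.1.trans hs.1, hs.2⟩, fun i => (h.2.2 i).trans hs.1⟩

theorem memTS_push {n : ℕ} {T t s : ℝ} {u : Fin n → ℝ} (h : memTS n T t u) (hZ : Zu u < n)
    (hs : s ∈ Icc t T) : memTS n T s (push u s) ∧ Zu (push u s) = Zu u + 1 := by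
  obtain ⟨⟨k, hk, hmem, hmono, hneg⟩, ⟨ht0, -⟩, hle⟩ := h
  obtain rfl : Zu u = k :=
    Zu_eq_of_forall hk (fun i hi => by linarith [(hmem i hi).1]) hneg
  have hpush_le : ∀ i, push u s i ≤ s := fun i => by
    unfold push; split_ifs
    exacts [le_rfl, (hle i).trans hs.1]
  have hmem' : ∀ i : Fin n, (i : ℕ) < Zu u + 1 → push u s i ∈ Icc (0 : ℝ) T := fun i hi => by
    unfold push; split_ifs with hiZ
    exacts [⟨ht0.trans hs.1, hs.2⟩, hmem i (by omega)]
  have hneg' : ∀ i : Fin n, Zu u + 1 ≤ (i : ℕ) → push u s i = -1 := fun i hi => by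
    rw [push, if_neg (by omega)]
    exact hneg i (by omega)
  refine ⟨⟨⟨Zu u + 1, hZ, hmem', fun i j hj hij => ?_, hneg'⟩, ⟨ht0.trans hs.1, hs.2⟩,
    hpush_le⟩, Zu_eq_of_forall hZ (fun i hi => by linarith [(hmem' i hi).1]) hneg'⟩
  by_cases hjZ : (j : ℕ) = Zu u
  · rw [show push u s j = s by simp [push, hjZ]]
    exact hpush_le i
  · have hiZ : (i : ℕ) ≠ Zu u := by have := Fin.le_iff_val_le_val.1 hij; omega
    simp only [push, if_neg hiZ, if_neg hjZ]
    exact hmono i j (by omega) hij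

theorem le_mul_exp_of_le_add_integral {g : ℝ → ℝ} {t T A K : ℝ} (htT : t ≤ T) (hK : 0 ≤ K)
    (hg : ContinuousOn g (Icc t T)) (hle : ∀ s ∈ Icc t T, g s ≤ A + K * ∫ r in s..T, g r) :
    g t ≤ A * Real.exp (K * (T - t)) := by
  set F : ℝ → ℝ := fun s => A + K * ∫ r in s..T, g r with hF
  have hFc : ContinuousOn F (Icc t T) := by
    have := intervalIntegral.continuousOn_primitive_interval_left (μ := volume)
      (uIcc_of_le htT ▸ hg.integrableOn_Icc)
    exact continuousOn_const.add (continuousOn_const.mul (uIcc_of_le htT ▸ this))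
  have hF' : ∀ s ∈ Ioo t T, HasDerivAt F (K * -g s) s := fun s hs =>
    ((intervalIntegral.integral_hasDerivAt_left
      ((hg.mono (Icc_subset_Icc hs.1.le le_rfl)).intervalIntegrable_of_Icc hs.2.le)
      ((hg.mono Ioo_subset_Icc_self).stronglyMeasurableAtFilter isOpen_Ioo s hs)
      (hg.continuousAt (Icc_mem_nhds hs.1 hs.2))).const_mul K).const_add A
  -- The derivative `K (F s - g s) exp (K s)` is nonnegative because `g ≤ F`.
  have hmono : MonotoneOn (fun s => F s * Real.exp (K * s)) (Icc t T) := by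
    refine monotoneOn_of_hasDerivWithinAt_nonneg (convex_Icc t T)
      (hFc.mul (by fun_prop)) (f' := fun s => K * (F s - g s) * Real.exp (K * s))
      (fun s hs => ?_) (fun s hs => ?_) <;> rw [interior_Icc] at hs
    · have hexp : HasDerivAt (fun s => Real.exp (K * s)) (Real.exp (K * s) * K) s := by
        simpa using ((hasDerivAt_id s).const_mul K).exp
      exact ((hF' s hs).mul hexp).hasDerivWithinAt.congr_deriv (by ring)
    · exact mul_nonneg (mul_nonneg hK (sub_nonneg.2 (hle s (Ioo_subset_Icc_self hs))))
        (Real.exp_pos _).le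
  have hFt : F t * Real.exp (K * t) ≤ A * Real.exp (K * T) := by
    simpa [hF] using hmono (left_mem_Icc.2 htT) (right_mem_Icc.2 htT) htT
  calc g t ≤ F t := hle t (left_mem_Icc.2 htT)
    _ ≤ A * Real.exp (K * (T - t)) := by
      rw [mul_sub, Real.exp_sub, mul_div_assoc', le_div_iff₀ (Real.exp_pos _)]
      exact hFt

theorem continuousOn_of_eq_add_integral {ι : Type*} [Fintype ι] {f : ℝ → ι → ℝ} {a : ι → ℝ}
    {h : ι → ℝ → ℝ} {t T : ℝ} (htT : t ≤ T) (hh : ∀ i, IntervalIntegrable (h i) volume t T)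
    (hf : ∀ i, ∀ s ∈ Icc t T, f s i = a i + ∫ r in s..T, h i r) :
    ContinuousOn f (Icc t T) :=
  continuousOn_pi.2 fun i => by
    have := intervalIntegral.continuousOn_primitive_interval_left
      ((intervalIntegrable_iff_integrableOn_Icc_of_le htT).1 (hh i) |> (uIcc_of_le htT ▸ ·))
    exact (continuousOn_const.add (uIcc_of_le htT ▸ this)).congr (hf i)

theorem norm_le_of_eq_add_integral {ι : Type*} [Fintype ι] {f : ℝ → ι → ℝ} {a : ι → ℝ}
    {h : ι → ℝ → ℝ} {t T P c K : ℝ} (htT : t ≤ T) (hP : 0 ≤ P) (hc : 0 ≤ c) (hK : 0 ≤ K)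
    (hh : ∀ i, IntervalIntegrable (h i) volume t T)
    (hf : ∀ i, ∀ s ∈ Icc t T, f s i = a i + ∫ r in s..T, h i r) (ha : ∀ i, |a i| ≤ P)
    (hbound : ∀ i, ∀ r ∈ Icc t T, |h i r| ≤ c + K * ‖f r‖) :
    ‖f t‖ ≤ (P + c * (T - t)) * Real.exp (K * (T - t)) := by
  have hfc : ContinuousOn (fun s => ‖f s‖) (Icc t T) :=
    (continuousOn_of_eq_add_integral htT hh hf).norm
  refine le_mul_exp_of_le_add_integral htT hK hfc fun s hs => ?_
  have hsT := hs.2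
  have hint : IntervalIntegrable (fun r => ‖f r‖) volume s T :=
    (hfc.mono (Icc_subset_Icc hs.1 le_rfl)).intervalIntegrable_of_Icc hsT
  have hnonneg : 0 ≤ ∫ r in s..T, ‖f r‖ :=
    intervalIntegral.integral_nonneg hsT fun _ _ => norm_nonneg _
  refine (pi_norm_le_iff_of_nonneg (by positivity)).2 fun i => ?_
  calc ‖f s i‖ ≤ |a i| + ‖∫ r in s..T, h i r‖ := by
        rw [hf i s hs, Real.norm_eq_abs]; exact abs_add_le _ _
    _ ≤ P + ∫ r in s..T, (c + K * ‖f r‖) := by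
        refine add_le_add (ha i) (intervalIntegral.norm_integral_le_of_norm_le hsT ?_
          (intervalIntegrable_const.add (hint.const_mul K)))
        exact Filter.Eventually.of_forall fun r hr =>
          hbound i r ⟨hs.1.trans hr.1.le, hr.2⟩
    _ = P + c * (T - s) + K * ∫ r in s..T, ‖f r‖ := by
        rw [intervalIntegral.integral_add intervalIntegrable_const (hint.const_mul K),
          intervalIntegral.integral_const, intervalIntegral.integral_const_mul, smul_eq_mul]
        ring
    _ ≤ P + c * (T - t) + K * ∫ r in s..T, ‖f r‖ := by gcongr; exact hs.1

theorem memTS_noShock {n : ℕ} {T : ℝ} (hT : 0 ≤ T) : memTS n T 0 fun _ => -1 :=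
  ⟨⟨0, n.zero_le, fun _ h => absurd h (Nat.not_lt_zero _),
    fun _ _ h => absurd h (Nat.not_lt_zero _), fun _ _ => rfl⟩, ⟨le_rfl, hT⟩, fun _ => by norm_num⟩

section Model

variable {S n : ℕ} {T : ℝ} {D : Model S n}
  {Lpsi LQ LPsi Llam Psimax psimax Qmax lammax : ℝ} {Jmax : ℕ}

theorem Hyps.psimax_nonneg (H : Hyps S n T D Lpsi LQ LPsi Llam Psimax psimax Qmax lammax Jmax) :
    0 ≤ psimax :=
  (abs_nonneg _).trans (H.psi_bdd 0 _ D.m0 0 (memTS_noShock H.hT.le) H.hm0 ⟨0, H.hS⟩)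

theorem Hyps.Psimax_nonneg (H : Hyps S n T D Lpsi LQ LPsi Llam Psimax psimax Qmax lammax Jmax) :
    0 ≤ Psimax :=
  (abs_nonneg _).trans (H.Psi_bdd 0 n.zero_le D.m0 H.hm0 ⟨0, H.hS⟩)

theorem Hyps.Qmax_nonneg (H : Hyps S n T D Lpsi LQ LPsi Llam Psimax psimax Qmax lammax Jmax) :
    0 ≤ Qmax :=
  (Finset.sum_nonneg fun _ _ => abs_nonneg _).trans
    (H.Q_bdd 0 _ D.m0 0 (memTS_noShock H.hT.le) H.hm0 ⟨0, H.hS⟩)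

theorem Hyps.lammax_nonneg (H : Hyps S n T D Lpsi LQ LPsi Llam Psimax psimax Qmax lammax Jmax) :
    0 ≤ lammax :=
  (H.lam_pos 1 le_rfl H.hn 0 ⟨le_rfl, H.hT.le⟩ D.m0 H.hm0).le.trans
    (H.lam_bdd 1 le_rfl H.hn 0 ⟨le_rfl, H.hT.le⟩ D.m0 H.hm0)

theorem abs_E1rhs_le (H : Hyps S n T D Lpsi LQ LPsi Llam Psimax psimax Qmax lammax Jmax)
    {μ v : ℝ → (Fin n → ℝ) → Fin S → ℝ} {u : Fin n → ℝ} {r B : ℝ} (hr : memTS n T r u)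
    (hμr : μ r u ∈ simplex S) (hB : 0 ≤ B) (hpush : Zu u < n → ‖v r (push u r)‖ ≤ B)
    (i : Fin S) :
    |E1rhs D μ v u i r| ≤ psimax + lammax * B + (Qmax + lammax) * ‖v r u‖ := by
  have habs_le_norm : ∀ w : Fin S → ℝ, ∀ j, |w j| ≤ ‖w‖ := fun w j => by
    simpa using norm_le_pi_norm w j
  have hψ := H.psi_bdd r u (μ r u) (v r u) hr hμr i
  have hQ : |∑ j, D.Q r u (μ r u) (v r u) i j * v r u j| ≤ Qmax * ‖v r u‖ :=
    calc |∑ j, D.Q r u (μ r u) (v r u) i j * v r u j|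
        ≤ ∑ j, |D.Q r u (μ r u) (v r u) i j| * ‖v r u‖ :=
          (Finset.abs_sum_le_sum_abs _ _).trans <| Finset.sum_le_sum fun j _ => by
            rw [abs_mul]; exact mul_le_mul_of_nonneg_left (habs_le_norm _ j) (abs_nonneg _)
      _ ≤ Qmax * ‖v r u‖ := by
          rw [← Finset.sum_mul]
          exact mul_le_mul_of_nonneg_right (H.Q_bdd r u _ _ hr hμr i) (norm_nonneg _)
  have hjump : |if Zu u < n then
      D.lam (Zu u + 1) r (μ r u) * (v r (push u r) (D.J r i) - v r u i) else 0|
      ≤ lammax * (B + ‖v r u‖) := by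
    split_ifs with hZ
    · have hlam_pos := H.lam_pos (Zu u + 1) le_add_self hZ r hr.2.1 (μ r u) hμr
      rw [abs_mul, abs_of_pos hlam_pos]
      exact mul_le_mul (H.lam_bdd (Zu u + 1) le_add_self hZ r hr.2.1 (μ r u) hμr)
        ((abs_sub _ _).trans (add_le_add ((habs_le_norm _ _).trans (hpush hZ))
          (habs_le_norm _ _))) (abs_nonneg _) H.lammax_nonneg
    · rw [abs_zero]
      exact mul_nonneg H.lammax_nonneg (add_nonneg hB (norm_nonneg _))
  calc |E1rhs D μ v u i r| ≤ psimax + Qmax * ‖v r u‖ + lammax * (B + ‖v r u‖) :=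
        (abs_add_three _ _ _).trans (add_le_add_three hψ hQ hjump)
    _ = psimax + lammax * B + (Qmax + lammax) * ‖v r u‖ := by ring

theorem norm_le_of_forall_norm_push_le
    (H : Hyps S n T D Lpsi LQ LPsi Llam Psimax psimax Qmax lammax Jmax)
    {μ v : ℝ → (Fin n → ℝ) → Fin S → ℝ} (hμ : ∀ t u, memTS n T t u → μ t u ∈ simplex S)
    (hsol : SolBackward S n T D μ v) {t B : ℝ} {u : Fin n → ℝ} (hts : memTS n T t u)
    (hB : 0 ≤ B) (hpush : Zu u < n → ∀ s ∈ Icc t T, ‖v s (push u s)‖ ≤ B) :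
    ‖v t u‖ ≤ (Psimax + psimax * T + lammax * B * T) * Real.exp ((Qmax + lammax) * T) := by
  have hmem : ∀ s ∈ Icc t T, memTS n T s u := fun s hs => memTS_of_mem_Icc hts hs
  have ht0 := hts.2.1.1
  have hT := H.hT.le
  have hPsi := H.Psimax_nonneg
  have hψ := H.psimax_nonneg
  have hQ := H.Qmax_nonneg
  have hlam := H.lammax_nonneg
  calc ‖v t u‖ ≤ (Psimax + (psimax + lammax * B) * (T - t)) *
        Real.exp ((Qmax + lammax) * (T - t)) :=
        norm_le_of_eq_add_integral hts.2.1.2 hPsi (by positivity) (by positivity)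
          (fun i => ((hsol u hts.1).2 t hts i).1)
          (fun i s hs => ((hsol u hts.1).2 s (hmem s hs) i).2)
          (fun i => H.Psi_bdd _ (Zu_le u) _ (hμ T u (hmem T (right_mem_Icc.2 hts.2.1.2))) i)
          (fun i r hr => abs_E1rhs_le H (hmem r hr) (hμ r u (hmem r hr)) hB
            (fun hZ => hpush hZ r hr) i)
    _ ≤ (Psimax + (psimax + lammax * B) * T) * Real.exp ((Qmax + lammax) * T) := by
        gcongr <;> first | positivity | linarith
    _ = (Psimax + psimax * T + lammax * B * T) * Real.exp ((Qmax + lammax) * T) := by ring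

end Model

theorem backward_apriori_bound_general (S n : ℕ) (T : ℝ) (D : Model S n)
    (Lpsi LQ LPsi Llam Psimax psimax Qmax lammax : ℝ) (Jmax : ℕ)
    (H : Hyps S n T D Lpsi LQ LPsi Llam Psimax psimax Qmax lammax Jmax)
    (μ : ℝ → (Fin n → ℝ) → Fin S → ℝ) (hμ : MemM S n T Qmax μ)
    (v : ℝ → (Fin n → ℝ) → Fin S → ℝ)
    (hsol : SolBackward S n T D μ v) :
    ∀ t u, memTS n T t u →
      ‖v t u‖ ≤ (Psimax + psimax * T) * Real.exp ((Qmax + lammax) * T) *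
        ∑ i ∈ Finset.range (n - Zu u + 1),
          (Real.exp ((Qmax + lammax) * T) * lammax * T) ^ i := by
  set C := (Psimax + psimax * T) * Real.exp ((Qmax + lammax) * T)
  set a := Real.exp ((Qmax + lammax) * T) * lammax * T
  have hT := H.hT.le
  have hC : 0 ≤ C := by have := H.Psimax_nonneg; have := H.psimax_nonneg; positivity
  have ha : 0 ≤ a := by have := H.lammax_nonneg; positivity
  suffices ∀ k t u, memTS n T t u → n - Zu u = k →
      ‖v t u‖ ≤ C * ∑ i ∈ Finset.range (k + 1), a ^ i from
    fun t u hts => this _ t u hts rfl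
  intro k
  induction k with
  | zero =>
    intro t u hts hk
    have hZ : ¬ Zu u < n := by omega
    simpa [C] using norm_le_of_forall_norm_push_le H hμ.1 hsol hts le_rfl (absurd · hZ)
  | succ k ih =>
    intro t u hts hk
    refine (norm_le_of_forall_norm_push_le H hμ.1 hsol hts
      (B := C * ∑ i ∈ Finset.range (k + 1), a ^ i) (by positivity)
      fun hZ s hs => ?_).trans_eq ?_
    · obtain ⟨hmem, hZpush⟩ := memTS_push hts hZ hs
      exact ih s _ hmem (by omega)
    · rw [geom_sum_succ (n := k + 1)]
      simp only [C, a]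
      ring

/-- **A priori bound depending on the number of shocks** (inside Lemma B.2).
If `μ ∈ M` and `v` is a regular solution of (E1) and (E3) given `μ`, then for all
`(t,u) ∈ TS`,
`‖v(t,u)‖ ≤ (Ψmax + ψmax T) e^{(Qmax+λmax)T} Σ_{i=0}^{n−Z(u)} (e^{(Qmax+λmax)T} λmax T)^i`. -/
theorem backward_apriori_bound (S n : ℕ) (T : ℝ) (D : Model S n)
    (Lpsi LQ LPsi Llam Psimax psimax Qmax lammax : ℝ) (Jmax : ℕ)
    (H : Hyps S n T D Lpsi LQ LPsi Llam Psimax psimax Qmax lammax Jmax)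
    (μ : ℝ → (Fin n → ℝ) → Fin S → ℝ) (hμ : MemM S n T Qmax μ)
    (v : ℝ → (Fin n → ℝ) → Fin S → ℝ)
    (hreg : Regular S n T v) (hsol : SolBackward S n T D μ v) :
    ∀ t u, memTS n T t u →
      ‖v t u‖ ≤ (Psimax + psimax * T) * Real.exp ((Qmax + lammax) * T) *
        ∑ i ∈ Finset.range (n - Zu u + 1),
          (Real.exp ((Qmax + lammax) * T) * lammax * T) ^ i :=
  backward_apriori_bound_general S n T D Lpsi LQ LPsi Llam Psimax psimax Qmax lammax Jmax H μ hμ v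
    hsol

end MFGShocks
end
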